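/- For every ε ∈ (0,1), the mixing times t_mix(Q;ε) := min{t ≥ 0 : d_Q(t) ≤ ε} and t_mix(K;ε) := min{t ≥ 0 : d_K(t) ≤ ε} are both finite, and they differ by at most one step: |t_mix(Q;ε) − t_mix(K;ε)| ≤ 1. -/

import Mathlib

/-!
Write `A(g, x) = 1_{x ∈ X_g} / |X_g|` and `B(x, h) = 1_{h ∈ G_x} / |G_x|`. Both are stochastic,
`Q = A B` and `K = B A`, and `π_Q A = π_K`, `π_K B = π_Q` (Burnside's lemma makes these
probability vectors). Hence `Q^{t+1} = A K^t B`: each row of `Q^{t+1} - π_Q` is an `A`-average of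
rows of `(K^t - π_K) B`, and right multiplication by a stochastic matrix does not increase `ℓ¹`
norms, so `d_Q(t+1) ≤ d_K(t)`; symmetrically `d_K(t+1) ≤ d_Q(t)`. Since the identity fixes every
point, all entries of `K` are positive, and Doeblin's contraction gives `d_K(t) → 0`.
-/

open Finset

variable (G X : Type) [Group G] [Fintype G] [DecidableEq G]
  [Fintype X] [DecidableEq X] [Nonempty X] [MulAction G X]

noncomputable section

/-- The fixed-point set `X_g = {x ∈ X : g • x = x}` of a group element. -/
def fixedPts (g : G) : Finset X := Finset.univ.filter fun x => g • x = x

/-- The stabilizer `G_x = {g ∈ G : g • x = x}` of a point, as a finset. -/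
def stab (x : X) : Finset G := Finset.univ.filter fun g => g • x = x

/-- `G* = {g ∈ G : X_g ≠ ∅}`. -/
def Gstar : Finset G := Finset.univ.filter fun g => (fixedPts G X g).Nonempty

/-- The dual Burnside kernel `Q(g,h) = ∑_{x ∈ X_g ∩ X_h} 1/(|X_g|·|G_x|)`. -/
def Q (g h : G) : ℝ :=
  ∑ x ∈ fixedPts G X g ∩ fixedPts G X h,
    1 / (((fixedPts G X g).card : ℝ) * ((stab G X x).card : ℝ))

/-- The primal Burnside kernel `K(x,y) = ∑_{g ∈ G_x ∩ G_y} 1/(|G_x|·|X_g|)`. -/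
def K (x y : X) : ℝ :=
  ∑ g ∈ stab G X x ∩ stab G X y,
    1 / (((stab G X x).card : ℝ) * ((fixedPts G X g).card : ℝ))

/-- The forward leg `A(g,x) = 1_{x ∈ X_g}/|X_g|`. -/
def A (g : G) (x : X) : ℝ :=
  if x ∈ fixedPts G X g then 1 / ((fixedPts G X g).card : ℝ) else 0

/-- The backward leg `B(x,h) = 1_{h ∈ G_x}/|G_x|`. -/
def B (x : X) (h : G) : ℝ :=
  if h ∈ stab G X x then 1 / ((stab G X x).card : ℝ) else 0


/-- `z = |X/G|`, the number of `G`-orbits on `X`. -/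
def numOrbits : ℕ := Nat.card (Quotient (MulAction.orbitRel G X))

/-- The dual stationary law `π_Q(g) = |X_g| / (z·|G|)`. -/
def piQ (g : G) : ℝ :=
  ((fixedPts G X g).card : ℝ) / ((numOrbits G X : ℝ) * (Fintype.card G : ℝ))

/-- The primal stationary law `π_K(x) = |G_x| / (z·|G|)`. -/
def piK (x : X) : ℝ :=
  ((stab G X x).card : ℝ) / ((numOrbits G X : ℝ) * (Fintype.card G : ℝ))

/-- The dual kernel as a matrix indexed by `G*`. -/
def Qmat : Matrix (Gstar G X) (Gstar G X) ℝ := fun g h => Q G X g.1 h.1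

/-- The primal kernel as a matrix indexed by `X`. -/
def Kmat : Matrix X X ℝ := fun x y => K G X x y

/-- Total variation distance of `Q^t(g,·)` from `π_Q`. -/
def tvQ (t : ℕ) (g : Gstar G X) : ℝ :=
  (1 / 2) * ∑ h : Gstar G X, |(Qmat G X ^ t) g h - piQ G X h.1|

/-- Total variation distance of `K^t(x,·)` from `π_K`. -/
def tvK (t : ℕ) (x : X) : ℝ :=
  (1 / 2) * ∑ y : X, |(Kmat G X ^ t) x y - piK G X y|

/-- Worst-case total variation distance for the dual chain: `d_Q(t) = max_{g∈G*} tvQ t g`. -/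
def dQ (t : ℕ) : ℝ := ⨆ g : Gstar G X, tvQ G X t g

/-- Worst-case total variation distance for the primal chain: `d_K(t) = max_{x∈X} tvK t x`. -/
def dK (t : ℕ) : ℝ := ⨆ x : X, tvK G X t x

open Matrix

set_option linter.unusedSectionVars false

structure IsRowStochastic {m n : Type*} [Fintype n] (P : Matrix m n ℝ) : Prop where
  nonneg : ∀ i j, 0 ≤ P i j
  sum_row : ∀ i, ∑ j, P i j = 1

def rowDist {m n : Type*} [Fintype n] (M : Matrix m n ℝ) (π : n → ℝ) (i : m) : ℝ :=
  ∑ j, |M i j - π j|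

theorem Matrix.mul_pow_succ_eq_mul_pow_mul {m n α : Type*} [Fintype m] [Fintype n]
    [DecidableEq m] [DecidableEq n] [Semiring α] (A : Matrix m n α) (B : Matrix n m α) (t : ℕ) :
    (A * B) ^ (t + 1) = A * ((B * A) ^ t * B) := by
  induction t with
  | zero => simp
  | succ t ih => rw [pow_succ, ih, pow_succ]; simp only [Matrix.mul_assoc]

section Stochastic

variable {l m n : Type*} [Fintype m] [Fintype n]

theorem sum_abs_vecMul_le_of_sum_row_eq {Q : Matrix m n ℝ} {s : ℝ} (h0 : ∀ i j, 0 ≤ Q i j)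
    (hs : ∀ i, ∑ j, Q i j = s) (v : m → ℝ) : ∑ j, |(v ᵥ* Q) j| ≤ s * ∑ i, |v i| :=
  calc ∑ j, |(v ᵥ* Q) j| ≤ ∑ j, ∑ i, |v i| * Q i j := by
        refine sum_le_sum fun j _ => (abs_sum_le_sum_abs _ _).trans_eq ?_
        simp only [abs_mul, abs_of_nonneg (h0 _ j)]
    _ = s * ∑ i, |v i| := by simp only [sum_comm (γ := n), ← mul_sum, hs, mul_comm s, sum_mul]

theorem mul_apply_sub_eq_vecMul {M : Matrix l m ℝ} {P : Matrix m n ℝ} {π : m → ℝ} {π' : n → ℝ}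
    (hπ : π ᵥ* P = π') (i : l) (k : n) : (M * P) i k - π' k = ((M i - π) ᵥ* P) k := by
  rw [← hπ, sub_vecMul]
  rfl

namespace IsRowStochastic

theorem mul {P : Matrix l m ℝ} {R : Matrix m n ℝ} (hP : IsRowStochastic P)
    (hR : IsRowStochastic R) : IsRowStochastic (P * R) where
  nonneg i k := sum_nonneg fun j _ => mul_nonneg (hP.nonneg i j) (hR.nonneg j k)
  sum_row i := by
    simp only [mul_apply, sum_comm (γ := n), ← mul_sum, hR.sum_row, mul_one, hP.sum_row]

theorem pow [DecidableEq n] {P : Matrix n n ℝ} (hP : IsRowStochastic P) (t : ℕ) :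
    IsRowStochastic (P ^ t) := by
  obtain ⟨h0, h1⟩ := mem_rowStochastic_iff_sum.1
    (pow_mem (mem_rowStochastic_iff_sum.2 ⟨hP.nonneg, hP.sum_row⟩) t)
  exact ⟨h0, h1⟩

theorem sum_abs_vecMul_le {P : Matrix m n ℝ} (hP : IsRowStochastic P) (v : m → ℝ) :
    ∑ j, |(v ᵥ* P) j| ≤ ∑ i, |v i| := by
  simpa using sum_abs_vecMul_le_of_sum_row_eq hP.nonneg hP.sum_row v

theorem sum_abs_vecMul_le_of_le {P : Matrix m n ℝ} {c : ℝ} (hP : IsRowStochastic P)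
    (hc : ∀ i j, c ≤ P i j) {v : m → ℝ} (hv : ∑ i, v i = 0) :
    ∑ j, |(v ᵥ* P) j| ≤ (1 - c * Fintype.card n) * ∑ i, |v i| := by
  -- as `∑ v = 0`, lowering every entry by `c` does not change `v ᵥ* P`, but the rows of
  -- `P - c` sum to `1 - c |n|`
  have hshift : v ᵥ* P = v ᵥ* (P - of fun _ _ => c) := by
    ext j
    simp [vecMul, dotProduct, mul_sub, sum_sub_distrib, ← sum_mul, hv]
  rw [hshift]
  refine sum_abs_vecMul_le_of_sum_row_eq (fun i j => sub_nonneg.2 (hc i j)) (fun i => ?_) v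
  simp [sum_sub_distrib, hP.sum_row, mul_comm]

theorem rowDist_mul_le {P : Matrix m n ℝ} {π : m → ℝ} {π' : n → ℝ}
    (hP : IsRowStochastic P) (hπ : π ᵥ* P = π') (M : Matrix l m ℝ) (i : l) :
    rowDist (M * P) π' i ≤ rowDist M π i := by
  simp only [rowDist, mul_apply_sub_eq_vecMul hπ]
  exact hP.sum_abs_vecMul_le _

theorem rowDist_mul_le_of_forall_le {A : Matrix l m ℝ} {M : Matrix m n ℝ}
    {π : n → ℝ} {c : ℝ} (hA : IsRowStochastic A) (hM : ∀ j, rowDist M π j ≤ c) (i : l) :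
    rowDist (A * M) π i ≤ c := by
  have hdev (k : n) : (A * M) i k - π k = ∑ j, A i j * (M j k - π k) := by
    simp [mul_apply, mul_sub, sum_sub_distrib, ← sum_mul, hA.sum_row]
  calc rowDist (A * M) π i ≤ ∑ k, ∑ j, A i j * |M j k - π k| := by
        refine sum_le_sum fun k _ => (hdev k ▸ abs_sum_le_sum_abs _ _).trans_eq ?_
        simp only [abs_mul, abs_of_nonneg (hA.nonneg i _)]
    _ = ∑ j, A i j * rowDist M π j := by simp only [rowDist, mul_sum, sum_comm (γ := n)]
    _ ≤ ∑ j, A i j * c := sum_le_sum fun j _ => mul_le_mul_of_nonneg_left (hM j) (hA.nonneg i j)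
    _ = c := by rw [← sum_mul, hA.sum_row, one_mul]

theorem rowDist_le_two {M : Matrix m n ℝ} {π : n → ℝ} (hM : IsRowStochastic M)
    (hπ0 : ∀ j, 0 ≤ π j) (hπ1 : ∑ j, π j = 1) (i : m) : rowDist M π i ≤ 2 :=
  calc rowDist M π i ≤ ∑ j, (M i j + π j) :=
        sum_le_sum fun j _ => abs_sub_le_iff.2 ⟨by linarith [hπ0 j], by linarith [hM.nonneg i j]⟩
    _ = 2 := by rw [sum_add_distrib, hM.sum_row, hπ1]; norm_num

theorem rowDist_pow_le [DecidableEq n] {P : Matrix n n ℝ} {π : n → ℝ} {c : ℝ}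
    (hP : IsRowStochastic P) (hc : ∀ i j, c ≤ P i j) (hπ : π ᵥ* P = π) (hπ0 : ∀ j, 0 ≤ π j)
    (hπ1 : ∑ j, π j = 1) (t : ℕ) (i : n) :
    rowDist (P ^ t) π i ≤ 2 * (1 - c * Fintype.card n) ^ t := by
  induction t generalizing i with
  | zero => simpa using (hP.pow 0).rowDist_le_two hπ0 hπ1 i
  | succ t ih =>
    have hr : 0 ≤ 1 - c * Fintype.card n := by
      have := sum_le_sum fun j (_ : j ∈ univ) => hc i j
      rw [hP.sum_row, sum_const, card_univ, nsmul_eq_mul] at this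
      linarith
    have hcentred : ∑ j, ((P ^ t) i - π) j = 0 := by
      simp [sum_sub_distrib, (hP.pow t).sum_row, hπ1]
    calc rowDist (P ^ (t + 1)) π i = ∑ k, |(((P ^ t) i - π) ᵥ* P) k| := by
          simp only [rowDist, pow_succ, mul_apply_sub_eq_vecMul hπ]
      _ ≤ (1 - c * Fintype.card n) * rowDist (P ^ t) π i :=
          hP.sum_abs_vecMul_le_of_le hc hcentred
      _ ≤ (1 - c * Fintype.card n) * (2 * (1 - c * Fintype.card n) ^ t) :=
          mul_le_mul_of_nonneg_left (ih i) hr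
      _ = 2 * (1 - c * Fintype.card n) ^ (t + 1) := by ring

theorem exists_rowDist_pow_le [DecidableEq n] [Nonempty n] {P : Matrix n n ℝ}
    {π : n → ℝ} (hP : IsRowStochastic P) (hpos : ∀ i j, 0 < P i j) (hπ : π ᵥ* P = π)
    (hπ0 : ∀ j, 0 ≤ π j) (hπ1 : ∑ j, π j = 1) {ε : ℝ} (hε : 0 < ε) :
    ∃ t, ∀ i, rowDist (P ^ t) π i ≤ ε := by
  obtain ⟨⟨i₀, j₀⟩, -, hmin⟩ :=
    exists_min_image univ (fun p : n × n => P p.1 p.2) univ_nonempty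
  have hr : 1 - P i₀ j₀ * Fintype.card n < 1 := by
    have := mul_pos (hpos i₀ j₀) (Nat.cast_pos.2 (Fintype.card_pos (α := n)))
    linarith
  obtain ⟨t, ht⟩ := exists_pow_lt_of_lt_one (half_pos hε) hr
  refine ⟨t, fun i => ?_⟩
  have := hP.rowDist_pow_le (fun i j => hmin (i, j) (mem_univ _)) hπ hπ0 hπ1 t i
  linarith

end IsRowStochastic

theorem rowDist_mul_pow_succ_le [DecidableEq m] [DecidableEq n] {A : Matrix m n ℝ}
    {B : Matrix n m ℝ} {πm : m → ℝ} {πn : n → ℝ} {c : ℝ} (hA : IsRowStochastic A)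
    (hB : IsRowStochastic B) (hπ : πn ᵥ* B = πm) {t : ℕ}
    (h : ∀ j, rowDist ((B * A) ^ t) πn j ≤ c) (i : m) : rowDist ((A * B) ^ (t + 1)) πm i ≤ c := by
  rw [mul_pow_succ_eq_mul_pow_mul]
  exact hA.rowDist_mul_le_of_forall_le (fun j => (hB.rowDist_mul_le hπ _ j).trans (h j)) i

end Stochastic

theorem abs_sInf_sub_sInf_le_one {S T : Set ℕ} (hS : S.Nonempty) (hT : T.Nonempty)
    (hST : ∀ t ∈ S, t + 1 ∈ T) (hTS : ∀ t ∈ T, t + 1 ∈ S) :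
    |((sInf S : ℕ) : ℤ) - (sInf T : ℕ)| ≤ 1 := by
  have h₁ := Nat.sInf_le (hST _ (Nat.sInf_mem hS))
  have h₂ := Nat.sInf_le (hTS _ (Nat.sInf_mem hT))
  rw [abs_le]
  omega

theorem sum_ite_mem_one_div_card {ι : Type*} [Fintype ι] [DecidableEq ι] {S : Finset ι}
    (hS : S.Nonempty) : ∑ i, (if i ∈ S then 1 / (#S : ℝ) else 0) = 1 := by
  rw [sum_ite_mem, univ_inter, sum_const, nsmul_eq_mul, mul_one_div, div_self]
  exact_mod_cast hS.card_pos.ne'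

theorem sum_div_mul_ite_mem {ι : Type*} [Fintype ι] [DecidableEq ι] (S : Finset ι) (w : ι → ℝ)
    (Z : ℝ) (hw : ∀ i ∈ S, w i ≠ 0) :
    ∑ i, w i / Z * (if i ∈ S then 1 / w i else 0) = #S / Z := by
  simp only [mul_ite, mul_zero, sum_ite_mem, univ_inter]
  rw [sum_congr rfl fun i hi => show w i / Z * (1 / w i) = 1 / Z by field_simp [hw i hi],
    sum_const, nsmul_eq_mul, mul_one_div]

theorem mem_stab_iff_mem_fixedPts {g : G} {x : X} : g ∈ stab G X x ↔ x ∈ fixedPts G X g := by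
  simp [stab, fixedPts]

theorem one_mem_stab (x : X) : (1 : G) ∈ stab G X x := by
  simp [stab]

theorem mem_Gstar_of_mem_fixedPts {g : G} {x : X} (hx : x ∈ fixedPts G X g) : g ∈ Gstar G X := by
  simp only [Gstar, mem_filter, mem_univ, true_and]
  exact ⟨x, hx⟩

theorem mem_Gstar_of_mem_stab {g : G} {x : X} (hg : g ∈ stab G X x) : g ∈ Gstar G X :=
  mem_Gstar_of_mem_fixedPts G X ((mem_stab_iff_mem_fixedPts G X).1 hg)

instance : Nonempty (Gstar G X) :=
  ⟨⟨1, mem_Gstar_of_mem_stab G X (one_mem_stab G X (Classical.arbitrary X))⟩⟩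

theorem sum_Gstar_eq_sum {f : G → ℝ} (hf : ∀ g ∉ Gstar G X, f g = 0) :
    ∑ g : Gstar G X, f g = ∑ g, f g := by
  rw [sum_coe_sort]
  exact sum_subset (subset_univ _) fun g _ hg => hf g hg

def Amat : Matrix (Gstar G X) X ℝ := fun g x => A G X g x

def Bmat : Matrix X (Gstar G X) ℝ := fun x h => B G X x h

theorem B_eq_zero_of_notMem_Gstar {x : X} {g : G} (hg : g ∉ Gstar G X) : B G X x g = 0 :=
  if_neg fun hgx => hg (mem_Gstar_of_mem_stab G X hgx)

theorem isRowStochastic_Amat : IsRowStochastic (Amat G X) where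
  nonneg g x := by unfold Amat A; split_ifs <;> positivity
  sum_row g := sum_ite_mem_one_div_card (mem_filter.1 g.2).2

theorem isRowStochastic_Bmat : IsRowStochastic (Bmat G X) where
  nonneg x h := by unfold Bmat B; split_ifs <;> positivity
  sum_row x := by
    change ∑ h : Gstar G X, B G X x h = 1
    rw [sum_Gstar_eq_sum G X fun g hg => B_eq_zero_of_notMem_Gstar G X hg]
    exact sum_ite_mem_one_div_card ⟨1, one_mem_stab G X x⟩

theorem Qmat_eq_Amat_mul_Bmat : Qmat G X = Amat G X * Bmat G X := by
  ext g h
  simp only [Qmat, Q, Amat, Bmat, A, B, mul_apply, mem_stab_iff_mem_fixedPts, ite_mul, mul_ite,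
    zero_mul, mul_zero, div_mul_div_comm, one_mul, ← ite_and, ← mem_inter, sum_ite_mem, univ_inter]
  rw [inter_comm]

theorem Kmat_eq_Bmat_mul_Amat : Kmat G X = Bmat G X * Amat G X := by
  ext x y
  change K G X x y = ∑ h : Gstar G X, B G X x h * A G X h y
  rw [sum_Gstar_eq_sum G X (f := fun g => B G X x g * A G X g y) fun g hg => by
    rw [B_eq_zero_of_notMem_Gstar G X hg, zero_mul]]
  simp only [K, A, B, ← mem_stab_iff_mem_fixedPts, ite_mul, mul_ite, zero_mul, mul_zero,
    div_mul_div_comm, one_mul, ← ite_and, ← mem_inter, sum_ite_mem, univ_inter]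
  rw [inter_comm]

theorem numOrbits_mul_card_pos : 0 < (numOrbits G X : ℝ) * Fintype.card G := by
  have : Nonempty (Quotient (MulAction.orbitRel G X)) := ⟨⟦Classical.arbitrary X⟧⟩
  have : 0 < numOrbits G X := Nat.card_pos
  positivity

theorem piK_nonneg (x : X) : 0 ≤ piK G X x := by
  have := numOrbits_mul_card_pos G X
  unfold piK
  positivity

theorem sum_card_stab : ∑ x, #(stab G X x) = numOrbits G X * Fintype.card G := by
  have : Fintype (Quotient (MulAction.orbitRel G X)) := Fintype.ofFinite _
  have hfix (g : G) : #(fixedPts G X g) = Fintype.card (MulAction.fixedBy X g) := by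
    rw [fixedPts, ← Fintype.card_subtype]
    exact Fintype.card_congr (Equiv.refl _)
  simp only [stab, card_filter]
  rw [sum_comm, numOrbits, Nat.card_eq_fintype_card,
    ← MulAction.sum_card_fixedBy_eq_card_orbits_mul_card_group]
  simp only [← hfix, fixedPts, card_filter]

theorem sum_piK : ∑ x, piK G X x = 1 := by
  simp only [piK, ← sum_div, ← Nat.cast_sum, sum_card_stab, Nat.cast_mul]
  exact div_self (numOrbits_mul_card_pos G X).ne'

theorem piQ_vecMul_Amat : (fun g : Gstar G X => piQ G X g) ᵥ* Amat G X = piK G X := by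
  ext x
  change ∑ g : Gstar G X, piQ G X g * A G X g x = _
  rw [sum_Gstar_eq_sum G X (f := fun g => piQ G X g * A G X g x) fun g hg => ?_]
  · simp only [A, piQ, ← mem_stab_iff_mem_fixedPts]
    exact sum_div_mul_ite_mem _ _ _ fun g hg =>
      Nat.cast_ne_zero.2 (card_ne_zero_of_mem ((mem_stab_iff_mem_fixedPts G X).1 hg))
  · rw [A, if_neg fun hx => hg (mem_Gstar_of_mem_fixedPts G X hx), mul_zero]

theorem piK_vecMul_Bmat : piK G X ᵥ* Bmat G X = fun g : Gstar G X => piQ G X g := by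
  ext h
  change ∑ x, piK G X x * B G X x h = _
  simp only [B, piK, piQ, mem_stab_iff_mem_fixedPts]
  exact sum_div_mul_ite_mem _ _ _ fun x _ =>
    Nat.cast_ne_zero.2 (card_ne_zero_of_mem (one_mem_stab G X x))

theorem Kmat_pos (x y : X) : 0 < Kmat G X x y := by
  refine sum_pos (fun g hg => ?_) ⟨1, mem_inter.2 ⟨one_mem_stab G X x, one_mem_stab G X y⟩⟩
  have := card_pos.2 ⟨g, (mem_inter.1 hg).1⟩
  have := card_pos.2 ⟨x, (mem_stab_iff_mem_fixedPts G X).1 (mem_inter.1 hg).1⟩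
  positivity

theorem dQ_le_iff {t : ℕ} {c : ℝ} :
    dQ G X t ≤ c ↔ ∀ g, rowDist (Qmat G X ^ t) (fun h : Gstar G X => piQ G X h) g ≤ 2 * c := by
  rw [dQ, ciSup_le_iff (Set.finite_range _).bddAbove]
  refine forall_congr' fun g => ?_
  rw [tvQ, ← rowDist]
  constructor <;> intro <;> linarith

theorem dK_le_iff {t : ℕ} {c : ℝ} :
    dK G X t ≤ c ↔ ∀ x, rowDist (Kmat G X ^ t) (piK G X) x ≤ 2 * c := by
  rw [dK, ciSup_le_iff (Set.finite_range _).bddAbove]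
  refine forall_congr' fun x => ?_
  rw [tvK, ← rowDist]
  constructor <;> intro <;> linarith

theorem dQ_succ_le (t : ℕ) : dQ G X (t + 1) ≤ dK G X t := by
  rw [dQ_le_iff, Qmat_eq_Amat_mul_Bmat]
  refine rowDist_mul_pow_succ_le (isRowStochastic_Amat G X) (isRowStochastic_Bmat G X)
    (piK_vecMul_Bmat G X) ?_
  rw [← Kmat_eq_Bmat_mul_Amat]
  exact (dK_le_iff G X).1 le_rfl

theorem dK_succ_le (t : ℕ) : dK G X (t + 1) ≤ dQ G X t := by
  rw [dK_le_iff, Kmat_eq_Bmat_mul_Amat]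
  refine rowDist_mul_pow_succ_le (isRowStochastic_Bmat G X) (isRowStochastic_Amat G X)
    (piQ_vecMul_Amat G X) ?_
  rw [← Qmat_eq_Amat_mul_Bmat]
  exact (dQ_le_iff G X).1 le_rfl

theorem exists_dK_le {ε : ℝ} (hε : 0 < ε) : ∃ t, dK G X t ≤ ε := by
  have hK := Kmat_eq_Bmat_mul_Amat G X
  have hstat : piK G X ᵥ* Kmat G X = piK G X := by
    rw [hK, ← vecMul_vecMul, piK_vecMul_Bmat, piQ_vecMul_Amat]
  have hKstoch : IsRowStochastic (Kmat G X) :=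
    hK ▸ (isRowStochastic_Bmat G X).mul (isRowStochastic_Amat G X)
  obtain ⟨t, ht⟩ := hKstoch.exists_rowDist_pow_le (Kmat_pos G X) hstat (piK_nonneg G X)
    (sum_piK G X) (mul_pos two_pos hε)
  exact ⟨t, (dK_le_iff G X).2 ht⟩

theorem mixing_time_equivalence (ε : ℝ) (hε0 : 0 < ε) :
    ∃ tQ tK : ℕ,
      IsLeast {t : ℕ | dQ G X t ≤ ε} tQ ∧
      IsLeast {t : ℕ | dK G X t ≤ ε} tK ∧
      |(tQ : ℤ) - (tK : ℤ)| ≤ 1 := by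
  obtain ⟨t, ht⟩ := exists_dK_le G X hε0
  have hK : {t : ℕ | dK G X t ≤ ε}.Nonempty := ⟨t, ht⟩
  have hQ : {t : ℕ | dQ G X t ≤ ε}.Nonempty := ⟨t + 1, (dQ_succ_le G X t).trans ht⟩
  exact ⟨_, _, isLeast_csInf hQ, isLeast_csInf hK, abs_sInf_sub_sInf_le_one hQ hK
    (fun t ht => (dK_succ_le G X t).trans ht) (fun t ht => (dQ_succ_le G X t).trans ht)⟩

end
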